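/- The restriction ĥ = ι*ĝ of the Sasaki metric to the mass shell Γ_m (m > 0) is a Lorentzian metric of signature (1, 2n−2), and the vector field N = (I^V)^{-1}(p/m) (the vertical lift of p/m) is a unit normal to Γ_m: ĝ(N,N) = −1 and ĝ(N,Z) = dH(Z)/m = 0 for every Z tangent to Γ_m. In particular every horizontal vector field is tangent to Γ_m. -/

import Mathlib

open scoped BigOperators
open Matrix

def thetaForm (n : ℕ) (Γ : Fin n → Fin n → Fin n → ℝ) (p : Fin n → ℝ)
    (Z : (Fin n → ℝ) × (Fin n → ℝ)) : Fin n → ℝ :=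
  fun μ => Z.2 μ + ∑ α, ∑ β, Γ μ α β * p β * Z.1 α

/-- The Sasaki bundle metric `ĝ`. -/
def sasaki (n : ℕ) (g : Matrix (Fin n) (Fin n) ℝ) (Γ : Fin n → Fin n → Fin n → ℝ)
    (p : Fin n → ℝ) (Z W : (Fin n → ℝ) × (Fin n → ℝ)) : ℝ :=
  (∑ μ, ∑ ν, g μ ν * Z.1 μ * W.1 ν) +
    ∑ μ, ∑ ν, g μ ν * thetaForm n Γ p Z μ * thetaForm n Γ p W ν

/-- The differential of the Hamiltonian, `dH = g_{μν} p^μ θ^ν`, evaluated on `Z`; a tangent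
vector `Z` is tangent to the mass shell `Γ_m` iff `dH(Z) = 0`. -/
def dHform (n : ℕ) (g : Matrix (Fin n) (Fin n) ℝ) (Γ : Fin n → Fin n → Fin n → ℝ)
    (p : Fin n → ℝ) (Z : (Fin n → ℝ) × (Fin n → ℝ)) : ℝ :=
  ∑ ν, (∑ μ, g μ ν * p μ) * thetaForm n Γ p Z ν

/-- The vertical lift `(I^V)⁻¹(p/m) = (1/m) p^μ ∂/∂p^μ`, the unit normal `N` of `Γ_m`. -/
noncomputable def unitNormal (n : ℕ) (p : Fin n → ℝ) (m : ℝ) :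
    (Fin n → ℝ) × (Fin n → ℝ) :=
  ((0 : Fin n → ℝ), m⁻¹ • p)

/-- The horizontal lift of `X`. -/
def horLift (n : ℕ) (Γ : Fin n → Fin n → Fin n → ℝ) (p : Fin n → ℝ) (X : Fin n → ℝ) :
    (Fin n → ℝ) × (Fin n → ℝ) :=
  (X, fun μ => -(∑ α, ∑ β, Γ μ α β * p β * X α))

/- ### Auxiliary bilinear-form machinery -/

def gForm (n : ℕ) (g : Matrix (Fin n) (Fin n) ℝ) (u v : Fin n → ℝ) : ℝ :=
  ∑ μ, ∑ ν, g μ ν * u μ * v ν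

lemma gForm_zero_left (n g v) : gForm n g 0 v = 0 := by simp [gForm]

lemma gForm_zero_right (n g u) : gForm n g u 0 = 0 := by simp [gForm]

lemma gForm_smul_left (n g) (c : ℝ) (u v) : gForm n g (c • u) v = c * gForm n g u v := by
  simp only [gForm, Finset.mul_sum, Pi.smul_apply, smul_eq_mul]
  exact Finset.sum_congr rfl fun μ _ => Finset.sum_congr rfl fun ν _ => by ring

lemma gForm_smul_right (n g) (c : ℝ) (u v) : gForm n g u (c • v) = c * gForm n g u v := by
  simp only [gForm, Finset.mul_sum, Pi.smul_apply, smul_eq_mul]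
  exact Finset.sum_congr rfl fun μ _ => Finset.sum_congr rfl fun ν _ => by ring

lemma gForm_add_left (n g) (u u' v) : gForm n g (u + u') v = gForm n g u v + gForm n g u' v := by
  simp only [gForm, ← Finset.sum_add_distrib, Pi.add_apply]
  exact Finset.sum_congr rfl fun μ _ => Finset.sum_congr rfl fun ν _ => by ring

lemma gForm_add_right (n g) (u v v') : gForm n g u (v + v') = gForm n g u v + gForm n g u v' := by
  simp only [gForm, ← Finset.sum_add_distrib, Pi.add_apply]
  exact Finset.sum_congr rfl fun μ _ => Finset.sum_congr rfl fun ν _ => by ring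

lemma gForm_sub_left (n g) (u u' v) : gForm n g (u - u') v = gForm n g u v - gForm n g u' v := by
  simp only [gForm, ← Finset.sum_sub_distrib, Pi.sub_apply]
  exact Finset.sum_congr rfl fun μ _ => Finset.sum_congr rfl fun ν _ => by ring

lemma gForm_sub_right (n g) (u v v') : gForm n g u (v - v') = gForm n g u v - gForm n g u v' := by
  simp only [gForm, ← Finset.sum_sub_distrib, Pi.sub_apply]
  exact Finset.sum_congr rfl fun μ _ => Finset.sum_congr rfl fun ν _ => by ring

lemma gForm_sum_left {ι : Type*} [DecidableEq ι] (n g) (s : Finset ι) (f : ι → Fin n → ℝ) (v) :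
    gForm n g (∑ i ∈ s, f i) v = ∑ i ∈ s, gForm n g (f i) v := by
  induction s using Finset.induction_on with
  | empty => simp [gForm_zero_left]
  | insert _ _ h ih => simp [Finset.sum_insert h, gForm_add_left, ih]

lemma gForm_eq_dot (n g u v) : gForm n g u v = u ⬝ᵥ g.mulVec v := by
  simp only [gForm, dotProduct, Matrix.mulVec, Finset.mul_sum]
  exact Finset.sum_congr rfl fun μ _ => Finset.sum_congr rfl fun ν _ => by ring

lemma gForm_conj (n : ℕ) (g Q : Matrix (Fin n) (Fin n) ℝ) (x y : Fin n → ℝ) :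
    gForm n g (Q.mulVec x) (Q.mulVec y) = gForm n (Qᵀ * g * Q) x y := by
  rw [gForm_eq_dot, gForm_eq_dot, Matrix.mulVec_mulVec, Matrix.dotProduct_mulVec,
    Matrix.dotProduct_mulVec, ← Matrix.vecMul_transpose Q x, Matrix.vecMul_vecMul,
    Matrix.mul_assoc]

lemma gForm_diagonal (n : ℕ) (d : Fin n → ℝ) (u v : Fin n → ℝ) :
    gForm n (Matrix.diagonal d) u v = ∑ k, d k * u k * v k := by
  simp only [gForm, Matrix.diagonal_apply]
  refine Finset.sum_congr rfl fun μ _ => ?_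
  rw [Finset.sum_eq_single μ]
  · simp
  · intro ν _ hne; simp [Ne.symm hne]
  · simp

lemma gForm_diag_single_left (n : ℕ) (d : Fin n → ℝ) (j : Fin n) (u : Fin n → ℝ) :
    gForm n (Matrix.diagonal d) (Pi.single j 1) u = d j * u j := by
  rw [gForm_diagonal]
  rw [Finset.sum_eq_single j]
  · simp
  · intro k _ hne; simp [Pi.single_apply, hne]
  · simp

lemma gForm_diag_single_right (n : ℕ) (d : Fin n → ℝ) (j : Fin n) (u : Fin n → ℝ) :
    gForm n (Matrix.diagonal d) u (Pi.single j 1) = d j * u j := by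
  rw [gForm_diagonal]
  rw [Finset.sum_eq_single j]
  · simp [mul_comm]
  · intro k _ hne; simp [Pi.single_apply, hne]
  · simp

/- ### thetaForm and sasaki basic lemmas -/

lemma sasaki_eq (n g Γ p Z W) :
    sasaki n g Γ p Z W = gForm n g Z.1 W.1 + gForm n g (thetaForm n Γ p Z) (thetaForm n Γ p W) :=
  rfl

lemma dHform_eq (n g Γ p Z) : dHform n g Γ p Z = gForm n g p (thetaForm n Γ p Z) := by
  unfold dHform gForm
  rw [Finset.sum_comm]
  exact Finset.sum_congr rfl fun ν _ => by rw [Finset.sum_mul]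

lemma theta_horLift (n Γ p X) : thetaForm n Γ p (horLift n Γ p X) = 0 := by
  funext μ; simp [thetaForm, horLift]

lemma theta_vert (n Γ p) (v : Fin n → ℝ) : thetaForm n Γ p ((0 : Fin n → ℝ), v) = v := by
  funext μ; simp [thetaForm]

lemma theta_zero (n Γ p) : thetaForm n Γ p 0 = 0 := by
  funext μ; simp [thetaForm]

lemma theta_smul (n Γ p) (c : ℝ) (Z) :
    thetaForm n Γ p (c • Z) = c • thetaForm n Γ p Z := by
  funext μ
  simp only [thetaForm, Prod.smul_fst, Prod.smul_snd, Pi.smul_apply, smul_eq_mul,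
    Finset.mul_sum, mul_add]
  congr 1
  exact Finset.sum_congr rfl fun α _ => Finset.sum_congr rfl fun β _ => by ring

lemma theta_add (n Γ p) (Z W) :
    thetaForm n Γ p (Z + W) = thetaForm n Γ p Z + thetaForm n Γ p W := by
  funext μ
  simp only [thetaForm, Prod.fst_add, Prod.snd_add, Pi.add_apply]
  rw [show (∑ α, ∑ β, Γ μ α β * p β * (Z.1 α + W.1 α)) =
      ∑ α, ∑ β, (Γ μ α β * p β * Z.1 α + Γ μ α β * p β * W.1 α) from
    Finset.sum_congr rfl fun α _ => Finset.sum_congr rfl fun β _ => by ring]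
  simp only [Finset.sum_add_distrib]
  ring

lemma theta_sum {ι : Type*} [DecidableEq ι] (n Γ p) (s : Finset ι)
    (f : ι → (Fin n → ℝ) × (Fin n → ℝ)) :
    thetaForm n Γ p (∑ i ∈ s, f i) = ∑ i ∈ s, thetaForm n Γ p (f i) := by
  induction s using Finset.induction_on with
  | empty => exact theta_zero n Γ p
  | insert _ _ h ih => simp [Finset.sum_insert h, theta_add, ih]

lemma sasaki_zero_left (n g Γ p W) : sasaki n g Γ p 0 W = 0 := by
  rw [sasaki_eq, theta_zero]
  show gForm n g 0 W.1 + gForm n g 0 _ = 0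
  rw [gForm_zero_left, gForm_zero_left, add_zero]

lemma sasaki_sum_smul {ι : Type*} [Fintype ι] [DecidableEq ι] (n g Γ p) (c : ι → ℝ)
    (Z : ι → (Fin n → ℝ) × (Fin n → ℝ)) (W) :
    sasaki n g Γ p (∑ i, c i • Z i) W = ∑ i, c i * sasaki n g Γ p (Z i) W := by
  rw [sasaki_eq]
  rw [show (∑ i, c i • Z i).1 = ∑ i, c i • (Z i).1 by simp [Prod.fst_sum, Prod.smul_fst]]
  rw [theta_sum]
  rw [show (∑ i, thetaForm n Γ p (c i • Z i)) = ∑ i, c i • thetaForm n Γ p (Z i) from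
    Finset.sum_congr rfl fun i _ => theta_smul n Γ p (c i) (Z i)]
  rw [gForm_sum_left, gForm_sum_left, ← Finset.sum_add_distrib]
  refine Finset.sum_congr rfl fun i _ => ?_
  rw [gForm_smul_left, gForm_smul_left, sasaki_eq]
  ring

lemma sasaki_hor_hor (n g Γ p X Y) :
    sasaki n g Γ p (horLift n Γ p X) (horLift n Γ p Y) = gForm n g X Y := by
  rw [sasaki_eq, theta_horLift, theta_horLift]
  show gForm n g X Y + gForm n g 0 0 = gForm n g X Y
  rw [gForm_zero_left, add_zero]

lemma sasaki_hor_vert (n g Γ p X) (v : Fin n → ℝ) :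
    sasaki n g Γ p (horLift n Γ p X) ((0 : Fin n → ℝ), v) = 0 := by
  rw [sasaki_eq, theta_horLift, theta_vert]
  show gForm n g X 0 + gForm n g 0 v = 0
  rw [gForm_zero_left, gForm_zero_right, add_zero]

lemma sasaki_vert_hor (n g Γ p X) (v : Fin n → ℝ) :
    sasaki n g Γ p ((0 : Fin n → ℝ), v) (horLift n Γ p X) = 0 := by
  rw [sasaki_eq, theta_horLift, theta_vert]
  show gForm n g 0 X + gForm n g v 0 = 0
  rw [gForm_zero_left, gForm_zero_right, add_zero]

lemma sasaki_vert_vert (n g Γ p) (u v : Fin n → ℝ) :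
    sasaki n g Γ p ((0 : Fin n → ℝ), u) ((0 : Fin n → ℝ), v) = gForm n g u v := by
  rw [sasaki_eq, theta_vert, theta_vert]
  show gForm n g 0 0 + gForm n g u v = gForm n g u v
  rw [gForm_zero_left, zero_add]

lemma dH_hor (n g Γ p X) : dHform n g Γ p (horLift n Γ p X) = 0 := by
  rw [dHform_eq, theta_horLift, gForm_zero_right]

lemma dH_vert (n g Γ p) (v : Fin n → ℝ) :
    dHform n g Γ p ((0 : Fin n → ℝ), v) = gForm n g p v := by
  rw [dHform_eq, theta_vert]
lemma exists_ortho (n : ℕ) (g : Matrix (Fin n) (Fin n) ℝ) (p : Fin n → ℝ) (m : ℝ)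
    (hn : 0 < n) (hm : m ≠ 0) (Q : Matrix (Fin n) (Fin n) ℝ) (hdet : IsUnit Q.det)
    (hQ : Qᵀ * g * Q = Matrix.diagonal (fun i : Fin n => if (i : ℕ) = 0 then (-1 : ℝ) else 1))
    (hshell : gForm n g p p = -(m ^ 2)) :
    ∃ u : Fin n → (Fin n → ℝ), u ⟨0, hn⟩ = m⁻¹ • p ∧
      ∀ i j, gForm n g (u i) (u j) =
        if i = j then (if (i : ℕ) = 0 then (-1 : ℝ) else 1) else 0 := by
  set d : Fin n → ℝ := fun i : Fin n => if (i : ℕ) = 0 then (-1 : ℝ) else 1 with hd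
  set D := Matrix.diagonal d with hD
  set i0 : Fin n := ⟨0, hn⟩ with hi0
  have hdi0 : d i0 = -1 := by simp [hd, hi0]
  set q : Fin n → ℝ := Q⁻¹.mulVec p with hqdef
  have hq : Q.mulVec q = p := by
    rw [hqdef, Matrix.mulVec_mulVec, Matrix.mul_nonsing_inv Q hdet, Matrix.one_mulVec]
  set v : Fin n → ℝ := m⁻¹ • q with hv
  have hQv : Q.mulVec v = m⁻¹ • p := by
    rw [hv, Matrix.mulVec_smul, hq]
  have hvv : gForm n D v v = -1 := by
    have h1 : gForm n D q q = -(m ^ 2) := by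
      rw [← hQ, ← gForm_conj, hq, hshell]
    rw [hv, gForm_smul_left, gForm_smul_right, h1]
    field_simp
  -- the standard basis vectors
  set e : Fin n → (Fin n → ℝ) := fun i => Pi.single i 1 with he
  have hee : ∀ i j : Fin n, gForm n D (e i) (e j) = if i = j then d i else 0 := by
    intro i j
    rw [he, gForm_diag_single_left]
    simp only [Pi.single_apply]
    by_cases h : j = i
    · subst h; simp
    · simp [h, Ne.symm h]
  by_cases hc : v i0 = 1
  -- degenerate case : v = e i0
  · have hveq : v = e i0 := by
      have hsum : ∑ k, d k * v k * v k = -1 := by rw [← gForm_diagonal, ← hD, hvv]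
      have hsplit : d i0 * v i0 * v i0 + ∑ k ∈ Finset.univ.erase i0, d k * v k * v k
          = ∑ k, d k * v k * v k :=
        Finset.add_sum_erase Finset.univ (fun k => d k * v k * v k) (Finset.mem_univ i0)
      have hzero : ∑ k ∈ Finset.univ.erase i0, d k * v k * v k = 0 := by
        rw [hsum] at hsplit
        rw [hdi0, hc] at hsplit
        linarith
      have hterm : ∀ k ∈ Finset.univ.erase i0, d k * v k * v k = 0 := by
        refine (Finset.sum_eq_zero_iff_of_nonneg ?_).1 hzero
        intro k hk
        have hk0 : (k : ℕ) ≠ 0 := by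
          intro h
          exact (Finset.mem_erase.1 hk).1 (Fin.ext (by simp [h, hi0]))
        have : d k = 1 := by simp [hd, hk0]
        rw [this, one_mul]
        exact mul_self_nonneg _
      funext k
      by_cases hk : k = i0
      · subst hk; simp [hc, he, Pi.single_apply]
      · have hk' : k ∈ Finset.univ.erase i0 := Finset.mem_erase.2 ⟨hk, Finset.mem_univ _⟩
        have hk0 : (k : ℕ) ≠ 0 := by
          intro h; exact hk (Fin.ext (by simp [h, hi0]))
        have hdk : d k = 1 := by simp [hd, hk0]
        have h0 := hterm k hk'
        rw [hdk, one_mul] at h0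
        have hvk : v k = 0 := mul_self_eq_zero.1 h0
        simp [hvk, he, Pi.single_apply, hk]
    refine ⟨fun i => Q.mulVec (e i), ?_, ?_⟩
    · show Q.mulVec (e i0) = m⁻¹ • p
      rw [← hveq, hQv]
    · intro i j
      show gForm n g (Q.mulVec (e i)) (Q.mulVec (e j)) = _
      rw [gForm_conj, hQ, hee]
  -- general case : reflection
  · have h1 : (1 : ℝ) - v i0 ≠ 0 := sub_ne_zero.2 fun h => hc h.symm
    set w : Fin n → ℝ := v - e i0 with hw
    have hxw : ∀ x : Fin n → ℝ, gForm n D x w = gForm n D x v + x i0 := by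
      intro x
      rw [hw, gForm_sub_right, he, gForm_diag_single_right, hdi0]
      ring
    have hwx : ∀ x : Fin n → ℝ, gForm n D w x = gForm n D v x + x i0 := by
      intro x
      rw [hw, gForm_sub_left, he, gForm_diag_single_left, hdi0]
      ring
    have hvE : gForm n D v (e i0) = -(v i0) := by
      rw [he, gForm_diag_single_right, hdi0]; ring
    have hEv : gForm n D (e i0) v = -(v i0) := by
      rw [he, gForm_diag_single_left, hdi0]; ring
    have hww : gForm n D w w = 2 * v i0 - 2 := by
      rw [hxw, hwx, hw, Pi.sub_apply, hvv]
      have h2 : e i0 i0 = 1 := by simp [he, Pi.single_apply]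
      rw [h2]
      ring
    have hiw : ∀ i, gForm n D (e i) w = gForm n D w (e i) := by
      intro i
      have h2 : gForm n D (e i) v = gForm n D v (e i) := by
        rw [he, gForm_diag_single_left, gForm_diag_single_right]
      rw [hxw, hwx, h2]
    set r : Fin n → (Fin n → ℝ) :=
      fun i => e i + (gForm n D (e i) w / (1 - v i0)) • w with hr
    have hAi0 : gForm n D (e i0) w = 1 - v i0 := by
      rw [hxw, hEv]
      have : e i0 i0 = 1 := by simp [he, Pi.single_apply]
      rw [this]; ring
    have hri0 : r i0 = v := by
      rw [hr]
      simp only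
      rw [hAi0, div_self h1, one_smul, hw]
      abel
    have hgram : ∀ i j, gForm n D (r i) (r j) = if i = j then d i else 0 := by
      intro i j
      rw [← hee i j, hr]
      simp only
      rw [gForm_add_left, gForm_add_right, gForm_add_right, gForm_smul_left,
        gForm_smul_right, gForm_smul_right, gForm_smul_left, ← hiw j, hww]
      field_simp
      ring
    refine ⟨fun i => Q.mulVec (r i), ?_, ?_⟩
    · show Q.mulVec (r i0) = m⁻¹ • p
      rw [hri0, hQv]
    · intro i j
      show gForm n g (Q.mulVec (r i)) (Q.mulVec (r j)) = _
      rw [gForm_conj, hQ, hgram]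

/-- On the mass shell `Γ_m` (`m > 0`, `g_x(p,p) = −m²`), the vertical
lift `N = (I^V)⁻¹(p/m)` is a unit normal: `ĝ(N,N) = −1` and `m ĝ(N,Z) = dH(Z)`, so
`ĝ(N,Z) = 0` for every `Z` tangent to `Γ_m`; every horizontal vector is tangent to `Γ_m`;
and the restriction `ĥ = ι*ĝ` of the Sasaki metric to the tangent space of `Γ_m` is a
Lorentzian metric of signature `(1, 2n−2)`: there is a basis of `2n−1` tangent vectors
(the first being the timelike `L/m`) whose `ĝ`-Gram matrix is `diag(−1, 1, …, 1)`. -/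
theorem mass_shell_lorentzian (n : ℕ) (g : Matrix (Fin n) (Fin n) ℝ)
    (Γ : Fin n → Fin n → Fin n → ℝ) (p : Fin n → ℝ) (m : ℝ)
    (hgsym : ∀ μ ν, g μ ν = g ν μ)
    (hlorentz : ∃ Q : Matrix (Fin n) (Fin n) ℝ, IsUnit Q.det ∧
        Q.transpose * g * Q = Matrix.diagonal (fun i : Fin n => if (i : ℕ) = 0 then (-1 : ℝ) else 1))
    (hm : 0 < m)
    (hshell : ∑ μ, ∑ ν, g μ ν * p μ * p ν = -(m ^ 2)) :
    sasaki n g Γ p (unitNormal n p m) (unitNormal n p m) = -1 ∧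
    (∀ Z : (Fin n → ℝ) × (Fin n → ℝ),
        m * sasaki n g Γ p (unitNormal n p m) Z = dHform n g Γ p Z) ∧
    (∀ Z : (Fin n → ℝ) × (Fin n → ℝ), dHform n g Γ p Z = 0 →
        sasaki n g Γ p (unitNormal n p m) Z = 0) ∧
    (∀ X : Fin n → ℝ, dHform n g Γ p (horLift n Γ p X) = 0) ∧
    (∃ b : Fin (2 * n - 1) → (Fin n → ℝ) × (Fin n → ℝ),
        LinearIndependent ℝ b ∧
        (∀ i, dHform n g Γ p (b i) = 0) ∧
        (∀ i j, sasaki n g Γ p (b i) (b j) =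
            if i = j then (if (i : ℕ) = 0 then (-1 : ℝ) else 1) else 0)) := by
  have hm' : m ≠ 0 := ne_of_gt hm
  have hshell' : gForm n g p p = -(m ^ 2) := hshell
  have hn : 0 < n := by
    rcases Nat.eq_zero_or_pos n with h | h
    · subst h
      simp at hshell
      nlinarith
    · exact h
  obtain ⟨Q, hdet, hQ⟩ := hlorentz
  -- Part 2 first (used for part 3)
  have part2 : ∀ Z : (Fin n → ℝ) × (Fin n → ℝ),
      m * sasaki n g Γ p (unitNormal n p m) Z = dHform n g Γ p Z := by
    intro Z
    have h1 : sasaki n g Γ p (unitNormal n p m) Z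
        = gForm n g (0 : Fin n → ℝ) Z.1 + gForm n g (m⁻¹ • p) (thetaForm n Γ p Z) := by
      rw [sasaki_eq]
      congr 1
      rw [show thetaForm n Γ p (unitNormal n p m) = m⁻¹ • p from theta_vert n Γ p (m⁻¹ • p)]
    rw [h1, gForm_zero_left, zero_add, gForm_smul_left, dHform_eq, ← mul_assoc,
      mul_inv_cancel₀ hm', one_mul]
  refine ⟨?_, part2, ?_, fun X => dH_hor n g Γ p X, ?_⟩
  · -- ĝ(N,N) = -1
    have h1 : sasaki n g Γ p (unitNormal n p m) (unitNormal n p m)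
        = gForm n g (m⁻¹ • p) (m⁻¹ • p) := sasaki_vert_vert n g Γ p _ _
    rw [h1, gForm_smul_left, gForm_smul_right, hshell']
    field_simp
  · -- tangent vectors are orthogonal to N
    intro Z hZ
    have h2 := part2 Z
    rw [hZ] at h2
    exact (mul_eq_zero.1 h2).resolve_left hm'
  · -- the orthonormal tangent basis
    obtain ⟨u, hu0, hugram⟩ := exists_ortho n g p m hn hm' Q hdet hQ hshell'
    have hp : p = m • u ⟨0, hn⟩ := by
      rw [hu0, smul_smul, mul_inv_cancel₀ hm', one_smul]
    set bb : Fin (2 * n - 1) → (Fin n → ℝ) × (Fin n → ℝ) := fun k =>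
      if h : (k : ℕ) < n then horLift n Γ p (u ⟨(k : ℕ), h⟩)
      else ((0 : Fin n → ℝ), u ⟨(k : ℕ) - n + 1, by have := k.isLt; omega⟩) with hbb
    have hgram : ∀ i j, sasaki n g Γ p (bb i) (bb j) =
        if i = j then (if (i : ℕ) = 0 then (-1 : ℝ) else 1) else 0 := by
      intro i j
      by_cases hi : (i : ℕ) < n <;> by_cases hj : (j : ℕ) < n
      · simp only [hbb]
        rw [dif_pos hi, dif_pos hj, sasaki_hor_hor, hugram]
        by_cases hij : i = j
        · subst hij
          simp
        · have hne : (⟨(i : ℕ), hi⟩ : Fin n) ≠ ⟨(j : ℕ), hj⟩ := fun h =>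
            hij (Fin.ext (by simpa using h))
          simp [hij, hne]
      · simp only [hbb]
        rw [dif_pos hi, dif_neg hj, sasaki_hor_vert]
        have hij : i ≠ j := fun h => hj (h ▸ hi)
        simp [hij]
      · simp only [hbb]
        rw [dif_neg hi, dif_pos hj, sasaki_vert_hor]
        have hij : i ≠ j := fun h => hi (h ▸ hj)
        simp [hij]
      · simp only [hbb]
        rw [dif_neg hi, dif_neg hj, sasaki_vert_vert, hugram]
        have key : ∀ i' j' : Fin n, (i' : ℕ) = (i : ℕ) - n + 1 → (j' : ℕ) = (j : ℕ) - n + 1 →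
            ((if i' = j' then (if (i' : ℕ) = 0 then (-1 : ℝ) else 1) else 0) =
              if i = j then (if (i : ℕ) = 0 then (-1 : ℝ) else 1) else 0) := by
          intro i' j' h1 h2
          by_cases hij : i = j
          · subst hij
            have hij' : i' = j' := Fin.ext (by omega)
            subst hij'
            have h3 : (i' : ℕ) ≠ 0 := by omega
            have h4 : (i : ℕ) ≠ 0 := by omega
            simp [h3, h4]
          · have hij' : i' ≠ j' := fun h => hij (Fin.ext (by
              have := congrArg Fin.val h
              omega))
            simp [hij, hij']
        exact key _ _ rfl rfl
    have hdHb : ∀ i, dHform n g Γ p (bb i) = 0 := by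
      intro i
      by_cases hi : (i : ℕ) < n
      · simp only [hbb]
        rw [dif_pos hi]
        exact dH_hor n g Γ p _
      · simp only [hbb]
        rw [dif_neg hi, dH_vert]
        have key : ∀ j' : Fin n, (j' : ℕ) = (i : ℕ) - n + 1 → gForm n g p (u j') = 0 := by
          intro j' h2
          rw [hp, gForm_smul_left, hugram]
          have hne : (⟨0, hn⟩ : Fin n) ≠ j' := fun h => by
            have := congrArg Fin.val h
            simp at this
            omega
          simp [hne]
        exact key _ rfl
    have hli : LinearIndependent ℝ bb := by
      rw [Fintype.linearIndependent_iff]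
      intro c hc j
      have h2 : ∑ i, c i * sasaki n g Γ p (bb i) (bb j) = 0 := by
        rw [← sasaki_sum_smul, hc, sasaki_zero_left]
      have h3 : ∑ i, c i * sasaki n g Γ p (bb i) (bb j)
          = c j * (if (j : ℕ) = 0 then (-1 : ℝ) else 1) := by
        rw [Finset.sum_eq_single j]
        · rw [hgram]
          simp
        · intro i _ hij
          rw [hgram]
          simp [hij]
        · simp
      rw [h3] at h2
      by_cases h : (j : ℕ) = 0 <;> simp [h] at h2 <;> linarith
    exact ⟨bb, hli, hdHb, hgram⟩
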